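/- arXiv:2412.18467 — 3 statements merged into one kernel-verified Lean document; each statement's English description precedes it below -/
import Mathlib

section
/- For every 3×3 real matrix A, √3·|cof A| ≤ |A|², where |·| is the Frobenius norm and cof A is the cofactor matrix. Moreover, equality holds for A equal to the identity matrix, so the constant √3 is sharp. -/
/-!
The rows of `cof A` are the cross products of pairs of rows of `A`. Lagrange's identity
`|u ⨯₃ v|² = |u|²|v|² - (u ⬝ᵥ v)²` then gives, with `a, b, c` the squared lengths of the rows,
`|cof A|² ≤ ab + bc + ca ≤ (a + b + c)² / 3 = |A|⁴ / 3`.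
-/

/-- The cofactor matrix of a 3×3 real matrix: the transpose of the adjugate. -/
noncomputable def cof3 (A : Matrix (Fin 3) (Fin 3) ℝ) : Matrix (Fin 3) (Fin 3) ℝ :=
  A.adjugate.transpose

open Matrix

theorem cof3_eq_cross (A : Matrix (Fin 3) (Fin 3) ℝ) :
    cof3 A = ![A 1 ⨯₃ A 2, A 2 ⨯₃ A 0, A 0 ⨯₃ A 1] := by
  ext i j
  fin_cases i <;> fin_cases j <;>
    simp [cof3, adjugate_fin_three, cross_apply] <;> ring

theorem sum_sum_sq_eq_sum_dotProduct_self {m n R : Type*} [Fintype m] [Fintype n]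
    [CommSemiring R] (A : Matrix m n R) :
    ∑ i, ∑ j, A i j ^ 2 = ∑ i, A i ⬝ᵥ A i := by
  simp only [dotProduct, sq]

theorem cross_dotProduct_cross_self_le {R : Type*} [CommRing R] [LinearOrder R]
    [IsStrictOrderedRing R] (u v : Fin 3 → R) :
    u ⨯₃ v ⬝ᵥ u ⨯₃ v ≤ u ⬝ᵥ u * v ⬝ᵥ v := by
  rw [cross_dot_cross, dotProduct_comm v u]
  exact sub_le_self _ (mul_self_nonneg _)

theorem three_mul_add_mul_add_mul_le_sq {R : Type*} [CommRing R] [LinearOrder R]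
    [IsStrictOrderedRing R] (a b c : R) :
    3 * (a * b + b * c + c * a) ≤ (a + b + c) ^ 2 := by
  nlinarith [sq_nonneg (a - b), sq_nonneg (b - c), sq_nonneg (c - a)]

theorem three_mul_sum_sq_cof3_le (A : Matrix (Fin 3) (Fin 3) ℝ) :
    3 * ∑ i, ∑ j, cof3 A i j ^ 2 ≤ (∑ i, ∑ j, A i j ^ 2) ^ 2 := by
  set a := A 0 ⬝ᵥ A 0
  set b := A 1 ⬝ᵥ A 1
  set c := A 2 ⬝ᵥ A 2
  have hcof : ∑ i, ∑ j, cof3 A i j ^ 2 ≤ b * c + c * a + a * b := by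
    rw [sum_sum_sq_eq_sum_dotProduct_self, cof3_eq_cross, Fin.sum_univ_three]
    simp only [cons_val_zero, cons_val_one, cons_val_two]
    gcongr ?_ + ?_ + ?_ <;> apply cross_dotProduct_cross_self_le
  have hA : ∑ i, ∑ j, A i j ^ 2 = a + b + c := by
    rw [sum_sum_sq_eq_sum_dotProduct_self, Fin.sum_univ_three]
  calc 3 * ∑ i, ∑ j, cof3 A i j ^ 2 ≤ 3 * (a * b + b * c + c * a) := by linarith
    _ ≤ (∑ i, ∑ j, A i j ^ 2) ^ 2 := hA ▸ three_mul_add_mul_add_mul_le_sq a b c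

/-- For every 3×3 real matrix `A`, `√3 · |cof A| ≤ |A|²` (Frobenius norms), with
equality for `A = 1`, so the constant `√3` is sharp. -/
theorem sqrt_three_cof_le_frobenius_sq :
    (∀ A : Matrix (Fin 3) (Fin 3) ℝ,
      Real.sqrt 3 * Real.sqrt (∑ i, ∑ j, (cof3 A i j) ^ 2) ≤ ∑ i, ∑ j, (A i j) ^ 2) ∧
    Real.sqrt 3 * Real.sqrt (∑ i, ∑ j, (cof3 (1 : Matrix (Fin 3) (Fin 3) ℝ) i j) ^ 2)
      = ∑ i, ∑ j, ((1 : Matrix (Fin 3) (Fin 3) ℝ) i j) ^ 2 := by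
  refine ⟨fun A => ?_, ?_⟩
  · rw [← Real.sqrt_mul zero_le_three, Real.sqrt_le_iff]
    exact ⟨by positivity, three_mul_sum_sq_cof3_le A⟩
  · simp [cof3, adjugate_one, one_apply]
end

section
/- Let Ω = B(0,1) ⊂ ℝ², ω = B(0,ρ) for fixed ρ ∈ (0,1), M ∈ ℝ with 4 + M − Mρ² ≠ 0, and set ζ = 4/(4+M−Mρ²), ξ = (4+M)/(4+M−Mρ²). Define u(x) = ζx for |x| ≤ ρ and u(x) = (ξ + (1−ξ)/|x|²)x for ρ < |x| ≤ 1. Then u is continuous on B(0,1), u(x) = x on |x| = 1, u is harmonic on B(0,ρ) and on B(0,1)\overline{B(0,ρ)}, and the jump condition 2∂_ν u|_ω + 2∂_{−ν}u|_{Ω∖ω} − M J ∂_τ u = 0 holds on the circle |x| = ρ. -/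
open MeasureTheory

/-- Planar points/vectors. -/
abbrev V2 := Fin 2 → ℝ

/-- Euclidean norm on `ℝ²`. -/
noncomputable def en (x : V2) : ℝ := Real.sqrt (x 0 ^ 2 + x 1 ^ 2)

/-- The (classical) gradient of `u : ℝ² → ℝ²` as a 2×2 matrix field. -/
noncomputable def grad2 (u : V2 → V2) (x : V2) : Matrix (Fin 2) (Fin 2) ℝ :=
  fun i j => fderiv ℝ u x (Pi.single j 1) i

/-- The (componentwise) Laplacian of `u : ℝ² → ℝ²`. -/
noncomputable def lap2 (u : V2 → V2) (x : V2) : V2 :=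
  ∑ j : Fin 2, fderiv ℝ (fun y => fderiv ℝ u y (Pi.single j 1)) x (Pi.single j 1)

/-- The matrix of rotation by π/2 anticlockwise. -/
noncomputable def Jmat : Matrix (Fin 2) (Fin 2) ℝ := !![0, -1; 1, 0]

/-!
Inside `ω` the map is linear, hence harmonic. Outside it is `ξ x + (1 - ξ) x / |x|²`, and the
inversion `x ↦ x / |x|²` (the map `z ↦ 1 / z̄`) is harmonic away from the origin. The value of `ζ`
is exactly the one making `ζ x` and the outer map agree on `|x| = ρ`, and the outer map fixes the
unit circle since its coefficient there is `ξ + (1 - ξ) = 1`. On `|x| = ρ` the outer derivative in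
the radial direction is `(ξ - (1 - ξ) / ρ²) ν`, while `J ∂_τ u = ζ J² ν = -ζ ν`; so the jump
condition collapses to the scalar identity `(2 + M) ζ - 2 (ξ - (1 - ξ) / ρ²) = 0`.
-/

open Filter Topology

noncomputable def sqNorm (y : V2) : ℝ := y 0 ^ 2 + y 1 ^ 2

lemma continuous_sqNorm : Continuous sqNorm := by unfold sqNorm; fun_prop

lemma continuous_en : Continuous en := by unfold en; fun_prop

lemma en_sq (y : V2) : en y ^ 2 = sqNorm y := Real.sq_sqrt (by positivity)

noncomputable def dotL (y : V2) : V2 →L[ℝ] ℝ :=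
  y 0 • ContinuousLinearMap.proj 0 + y 1 • ContinuousLinearMap.proj 1

@[simp] lemma dotL_apply (y v : V2) : dotL y v = y 0 * v 0 + y 1 * v 1 := by simp [dotL]

lemma dotL_self (y : V2) : dotL y y = sqNorm y := by simp [sqNorm]; ring

lemma dotL_single (y : V2) (j : Fin 2) : dotL y (Pi.single j 1) = y j := by
  fin_cases j <;> simp

lemma hasFDerivAt_sqNorm (y : V2) : HasFDerivAt sqNorm ((2 : ℝ) • dotL y) y := by
  refine (((hasFDerivAt_apply 0 y).pow 2).add ((hasFDerivAt_apply 1 y).pow 2)).congr_fderiv ?_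
  ext v
  simp
  ring

noncomputable def radialField (a b : ℝ) (y : V2) : V2 := (a + b / sqNorm y) • y

lemma continuousOn_radialField (a b : ℝ) : ContinuousOn (radialField a b) {y | sqNorm y ≠ 0} :=
  ((continuousOn_const.add (continuousOn_const.div continuous_sqNorm.continuousOn
    fun _ hy => hy)).smul continuousOn_id)

lemma radialField_of_sqNorm_eq_one (a : ℝ) {y : V2} (hy : sqNorm y = 1) :
    radialField a (1 - a) y = y := by
  simp [radialField, hy]

noncomputable def radialFieldDeriv (a b : ℝ) (y : V2) : V2 →L[ℝ] V2 :=
  (a + b / sqNorm y) • ContinuousLinearMap.id ℝ V2 - ((2 * b / sqNorm y ^ 2) • dotL y).smulRight y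

lemma hasFDerivAt_radialField (a b : ℝ) {y : V2} (hy : sqNorm y ≠ 0) :
    HasFDerivAt (radialField a b) (radialFieldDeriv a b y) y := by
  have hcoef :=
    (((hasDerivAt_inv hy).comp_hasFDerivAt y (hasFDerivAt_sqNorm y)).const_mul b).const_add a
  refine (hcoef.smul (hasFDerivAt_id y)).congr_fderiv ?_
  ext v i
  simp [radialFieldDeriv]
  field_simp
  ring

lemma radialFieldDeriv_apply_self (a b : ℝ) (y : V2) :
    radialFieldDeriv a b y y = (a - b / sqNorm y) • y := by
  rcases eq_or_ne (sqNorm y) 0 with hy | hy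
  · simp [radialFieldDeriv, hy]
  · simp only [radialFieldDeriv, sub_apply, smul_apply, ContinuousLinearMap.smulRight_apply,
      ContinuousLinearMap.id_apply, dotL_self, smul_eq_mul, ← sub_smul]
    congr 1
    field_simp
    ring

lemma radialFieldDeriv_apply_single (a b : ℝ) (y : V2) (j : Fin 2) :
    radialFieldDeriv a b y (Pi.single j 1) =
      (a + b / sqNorm y) • Pi.single j 1 - (2 * b * y j / sqNorm y ^ 2) • y := by
  simp only [radialFieldDeriv, sub_apply, smul_apply, ContinuousLinearMap.smulRight_apply,
    ContinuousLinearMap.id_apply, dotL_single, smul_eq_mul]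
  ring_nf

noncomputable def radialFieldDeriv2 (b : ℝ) (j : Fin 2) (x : V2) : V2 →L[ℝ] V2 :=
  -(2 * b / sqNorm x ^ 2) • ((dotL x).smulRight (Pi.single j 1)
      + x j • ContinuousLinearMap.id ℝ V2 + (ContinuousLinearMap.proj j).smulRight x)
    + (8 * b * x j / sqNorm x ^ 3) • (dotL x).smulRight x

lemma hasFDerivAt_radialFieldDeriv_apply_single (a b : ℝ) (j : Fin 2) {x : V2}
    (hx : sqNorm x ≠ 0) :
    HasFDerivAt (fun y => radialFieldDeriv a b y (Pi.single j 1)) (radialFieldDeriv2 b j x) x := by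
  simp only [radialFieldDeriv_apply_single]
  have hq := hasFDerivAt_sqNorm x
  have hinv := (hasDerivAt_inv hx).comp_hasFDerivAt x hq
  have hinv2 := (hasDerivAt_inv (pow_ne_zero 2 hx)).comp_hasFDerivAt x (hq.pow 2)
  simp only [div_eq_mul_inv]
  have hpartial := (((hinv.const_mul b).const_add a).smul_const (Pi.single j 1)).sub
    ((((hasFDerivAt_apply j x).const_mul (2 * b)).mul hinv2).smul (hasFDerivAt_id x))
  refine hpartial.congr_fderiv ?_
  ext v i
  fin_cases j <;> fin_cases i <;> simp [radialFieldDeriv2] <;> field_simp <;> ring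

lemma sum_radialFieldDeriv2_apply_single (b : ℝ) (x : V2) :
    ∑ j : Fin 2, radialFieldDeriv2 b j x (Pi.single j 1) = 0 := by
  ext i
  fin_cases i <;> simp [radialFieldDeriv2, sqNorm] <;> field_simp <;> ring

lemma lap2_eq_sum_of_hasFDerivAt {u : V2 → V2} {D : V2 → V2 →L[ℝ] V2} {E : Fin 2 → V2 →L[ℝ] V2}
    {x : V2} (hD : ∀ᶠ y in 𝓝 x, HasFDerivAt u (D y) y)
    (hE : ∀ j, HasFDerivAt (fun y => D y (Pi.single j 1)) (E j) x) :
    lap2 u x = ∑ j, E j (Pi.single j 1) := by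
  refine Finset.sum_congr rfl fun j _ => ?_
  have hDj : (fun y => fderiv ℝ u y (Pi.single j 1)) =ᶠ[𝓝 x] fun y => D y (Pi.single j 1) :=
    hD.mono fun y hy => congrArg (· (Pi.single j 1)) hy.fderiv
  rw [hDj.fderiv_eq, (hE j).fderiv]

lemma lap2_eq_zero_of_eventuallyEq_clm {u : V2 → V2} (L : V2 →L[ℝ] V2) {x : V2}
    (h : u =ᶠ[𝓝 x] L) : lap2 u x = 0 := by
  rw [lap2_eq_sum_of_hasFDerivAt (D := fun _ => L) (E := fun _ => 0)
    (h.eventuallyEq_nhds.mono fun y hy => L.hasFDerivAt.congr_of_eventuallyEq hy)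
    fun j => hasFDerivAt_const _ _]
  simp

lemma lap2_eq_zero_of_eventuallyEq_radialField {u : V2 → V2} (a b : ℝ) {x : V2}
    (hx : sqNorm x ≠ 0) (h : u =ᶠ[𝓝 x] radialField a b) : lap2 u x = 0 := by
  have hD : ∀ᶠ y in 𝓝 x, HasFDerivAt u (radialFieldDeriv a b y) y := by
    filter_upwards [h.eventuallyEq_nhds, continuous_sqNorm.continuousAt.eventually_ne hx]
      with y hy hy0
    exact (hasFDerivAt_radialField a b hy0).congr_of_eventuallyEq hy
  rw [lap2_eq_sum_of_hasFDerivAt hD fun j => hasFDerivAt_radialFieldDeriv_apply_single a b j hx]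
  exact sum_radialFieldDeriv2_apply_single b x

lemma Jmat_mulVec_Jmat_mulVec (v : V2) : Jmat.mulVec (Jmat.mulVec v) = -v := by
  ext i
  fin_cases i <;> simp [Jmat, Matrix.mulVec, dotProduct, Fin.sum_univ_two]

lemma jump_eq_smul (ζ a b ρ M : ℝ) {x : V2} (hx : sqNorm x = ρ ^ 2) :
    (2 : ℝ) • (ζ • ContinuousLinearMap.id ℝ V2) (ρ⁻¹ • x)
        + (2 : ℝ) • radialFieldDeriv a b x (-(ρ⁻¹ • x))
        - M • Jmat.mulVec ((ζ • ContinuousLinearMap.id ℝ V2) (Jmat.mulVec (ρ⁻¹ • x))) =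
      (ρ⁻¹ * ((2 + M) * ζ - 2 * (a - b / ρ ^ 2))) • x := by
  simp only [map_neg, map_smul, radialFieldDeriv_apply_self, hx, smul_apply,
    ContinuousLinearMap.id_apply, Matrix.mulVec_smul, Jmat_mulVec_Jmat_mulVec, smul_neg, smul_smul]
  module

lemma ite_en_le_eventuallyEq_left {f g : V2 → V2} {ρ : ℝ} {x : V2} (hx : en x < ρ) :
    (fun y => if en y ≤ ρ then f y else g y) =ᶠ[𝓝 x] f :=
  (continuous_en.continuousAt.eventually_lt continuousAt_const hx).mono fun _ hy => if_pos hy.le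

lemma ite_en_le_eventuallyEq_right {f g : V2 → V2} {ρ : ℝ} {x : V2} (hx : ρ < en x) :
    (fun y => if en y ≤ ρ then f y else g y) =ᶠ[𝓝 x] g :=
  (continuousAt_const.eventually_lt continuous_en.continuousAt hx).mono fun _ hy => if_neg hy.not_ge

/-- The disk-disk map `u` (equal to `ζx` on `B(0,ρ)` and to `(ξ+(1−ξ)/|x|²)x` outside)
is continuous on the closed unit ball, is the identity on the unit circle, is harmonic
in `B(0,ρ)` and in the open annulus, and satisfies the jump condition
`2∂_ν u|_ω + 2∂_{−ν}u|_{Ω∖ω} − M J ∂_τ u = 0` on `|x| = ρ`. -/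
theorem disk_disk_solution (ρ M ζ ξ : ℝ) (hρ0 : 0 < ρ) (hρ1 : ρ < 1)
    (hden : 4 + M - M * ρ ^ 2 ≠ 0)
    (hζ : ζ = 4 / (4 + M - M * ρ ^ 2)) (hξ : ξ = (4 + M) / (4 + M - M * ρ ^ 2))
    (uin uout u : V2 → V2)
    (huin : uin = fun x => ζ • x)
    (huout : uout = fun x => (ξ + (1 - ξ) / (en x) ^ 2) • x)
    (hu : u = fun x => if en x ≤ ρ then uin x else uout x) :
    ContinuousOn u {x | en x ≤ 1} ∧
    (∀ x, en x = 1 → u x = x) ∧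
    (∀ x, en x < ρ → lap2 u x = 0) ∧
    (∀ x, ρ < en x → en x < 1 → lap2 u x = 0) ∧
    (∀ x : V2, en x = ρ →
      (2 : ℝ) • fderiv ℝ uin x (ρ⁻¹ • x)
        + (2 : ℝ) • fderiv ℝ uout x (-(ρ⁻¹ • x))
        - M • Jmat.mulVec (fderiv ℝ uin x (Jmat.mulVec (ρ⁻¹ • x))) = 0) := by
  have hζξ : ζ = ξ + (1 - ξ) / ρ ^ 2 := by rw [hζ, hξ]; field_simp; ring
  have hjump : (2 + M) * ζ - 2 * (ξ - (1 - ξ) / ρ ^ 2) = 0 := by rw [hζ, hξ]; field_simp; ring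
  have hsq : ∀ x, ρ ≤ en x → sqNorm x ≠ 0 := fun x hx => by
    rw [← en_sq]; exact (pow_pos (hρ0.trans_le hx) 2).ne'
  have hin : uin = ⇑(ζ • ContinuousLinearMap.id ℝ V2) := huin
  have hout : uout = radialField ξ (1 - ξ) := by rw [huout]; funext y; rw [radialField, en_sq]
  subst hin hout hu
  refine ⟨?_, fun x hx => ?_, fun x hx => ?_, fun x hx _ => ?_, fun x hx => ?_⟩
  · refine (continuous_if_le continuous_en continuous_const ?_ ?_ fun x hx => ?_).continuousOn
    · exact (ContinuousLinearMap.continuous _).continuousOn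
    · exact (continuousOn_radialField _ _).mono hsq
    · simp [radialField, ← en_sq, hx, hζξ]
  · simp only [if_neg (hx ▸ hρ1.not_ge)]
    exact radialField_of_sqNorm_eq_one ξ (by rw [← en_sq, hx, one_pow])
  · exact lap2_eq_zero_of_eventuallyEq_clm _ (ite_en_le_eventuallyEq_left hx)
  · exact lap2_eq_zero_of_eventuallyEq_radialField ξ (1 - ξ) (hsq x hx.le)
      (ite_en_le_eventuallyEq_right hx)
  · rw [ContinuousLinearMap.fderiv, (hasFDerivAt_radialField ξ (1 - ξ) (hsq x hx.ge)).fderiv,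
      jump_eq_smul ζ ξ (1 - ξ) ρ M (by rw [← en_sq, hx]), hjump, mul_zero, zero_smul]
end

section
/- Let u^s(R,θ) = (1, R² sin 2θ) and u^p(R,θ) = (1 + (M/2)R² cos 2θ, R² sin 2θ) in plane polar coordinates. Then both u^s and u^p are harmonic (as functions of (x₁,x₂) = (R cos θ, R sin θ)), they agree on the rays θ = ±π/4, and along those rays the jump condition 2∂_θ u^s − 2∂_θ u^p = M R Jᵀ ∂_R u^s holds (with the sign of J adjusted on θ = −π/4: 2∂_θ u^s − 2∂_θ u^p = −M R J ∂_R u^s there). -/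
/-! Both `u^s` and `u^p` are members of one family in `M`, with `u^s` at `M = 0`.
The Cartesian maps are the constant `(1, 0)` plus the diagonal `y ↦ B y y` of a bilinear map
`B`, and the Laplacian of such a diagonal is `2 ∑ⱼ B eⱼ eⱼ`; for the polarization of
`(M/2 (x₀² - x₁²), 2 x₀ x₁)` this sum vanishes. The two maps differ only by `M/2 (x₀² - x₁²)`,
which is zero on the diagonals `x₀ = ±x₁`. In polar form their second components coincide, so
`2∂_θ(u^s - u^p) = (2MR² sin 2θ, 0) = M R Jᵀ (0, 2R sin 2θ) = M R Jᵀ ∂_R u^s` for every `θ`;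
the condition on `θ = -π/4` is the same identity because `Jᵀ = -J`. -/

open MeasureTheory

theorem ContinuousLinearMap.hasFDerivAt_apply_self {𝕜 E F : Type*} [NontriviallyNormedField 𝕜]
    [NormedAddCommGroup E] [NormedSpace 𝕜 E] [NormedAddCommGroup F] [NormedSpace 𝕜 F]
    (B : E →L[𝕜] E →L[𝕜] F) (y : E) :
    HasFDerivAt (fun y => B y y) (B y + B.flip y) y := by
  refine (B.hasFDerivAt_of_bilinear (hasFDerivAt_id y) (hasFDerivAt_id y)).congr_fderiv ?_
  ext v
  simp

theorem lap2_const_add_apply_self (c : V2) (B : V2 →L[ℝ] V2 →L[ℝ] V2) (x : V2) :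
    lap2 (fun y => c + B y y) x = 2 • ∑ j, B (Pi.single j 1) (Pi.single j 1) := by
  have hfirst (e : V2) :
      (fun y => fderiv ℝ (fun y => c + B y y) y e) = fun y => (B.flip e + B e) y := by
    funext y
    rw [fderiv_const_add, (B.hasFDerivAt_apply_self y).fderiv]
    simp [add_comm]
  simp only [lap2, hfirst, ContinuousLinearMap.fderiv]
  simp [two_smul]

noncomputable def diskQuadBilin (M : ℝ) : V2 →L[ℝ] V2 →L[ℝ] V2 :=
  LinearMap.toContinuousLinearMap (LinearMap.toContinuousLinearMap.toLinearMap ∘ₗ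
    LinearMap.mk₂ ℝ (fun x y : V2 => ![M / 2 * (x 0 * y 0 - x 1 * y 1), x 0 * y 1 + x 1 * y 0])
      (by intros; ext i; fin_cases i <;> simp <;> ring)
      (by intros; ext i; fin_cases i <;> simp <;> ring)
      (by intros; ext i; fin_cases i <;> simp <;> ring)
      (by intros; ext i; fin_cases i <;> simp <;> ring))

theorem diskQuadBilin_apply (M : ℝ) (x y : V2) :
    diskQuadBilin M x y = ![M / 2 * (x 0 * y 0 - x 1 * y 1), x 0 * y 1 + x 1 * y 0] := rfl

noncomputable def diskQuad (M : ℝ) (x : V2) : V2 :=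
  ![1 + (M / 2) * (x 0 ^ 2 - x 1 ^ 2), 2 * x 0 * x 1]

theorem diskQuad_eq_const_add_diskQuadBilin (M : ℝ) :
    diskQuad M = fun y => ![1, 0] + diskQuadBilin M y y := by
  funext y
  ext i
  fin_cases i <;>
    simp only [diskQuad, diskQuadBilin_apply, Pi.add_apply, Fin.zero_eta, Fin.mk_one, Fin.isValue,
      Matrix.cons_val_zero, Matrix.cons_val_one] <;>
    ring

theorem lap2_diskQuad (M : ℝ) (x : V2) : lap2 (diskQuad M) x = 0 := by
  rw [diskQuad_eq_const_add_diskQuadBilin, lap2_const_add_apply_self]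
  ext i
  fin_cases i <;> simp [diskQuadBilin_apply]

theorem diskQuad_eq_of_sq_eq_sq {x : V2} (h : x 0 ^ 2 = x 1 ^ 2) (M M' : ℝ) :
    diskQuad M x = diskQuad M' x := by
  simp [diskQuad, h]

noncomputable def diskPolar (M R θ : ℝ) : V2 :=
  ![1 + (M / 2) * R ^ 2 * Real.cos (2 * θ), R ^ 2 * Real.sin (2 * θ)]

theorem hasDerivAt_diskPolar_angle (M R θ : ℝ) :
    HasDerivAt (diskPolar M R)
      ![-(M * R ^ 2 * Real.sin (2 * θ)), 2 * R ^ 2 * Real.cos (2 * θ)] θ := by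
  have h2θ : HasDerivAt (fun t : ℝ => 2 * t) 2 θ := by
    simpa using (hasDerivAt_id θ).const_mul 2
  refine hasDerivAt_pi.2 fun i => ?_
  fin_cases i <;>
    simp only [diskPolar, Fin.zero_eta, Fin.mk_one, Fin.isValue, Matrix.cons_val_zero,
      Matrix.cons_val_one]
  · exact ((h2θ.cos.const_mul (M / 2 * R ^ 2)).const_add 1).congr_deriv (by ring)
  · exact (h2θ.sin.const_mul (R ^ 2)).congr_deriv (by ring)

theorem hasDerivAt_diskPolar_radius (M R θ : ℝ) :
    HasDerivAt (fun r => diskPolar M r θ)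
      ![M * R * Real.cos (2 * θ), 2 * R * Real.sin (2 * θ)] R := by
  refine hasDerivAt_pi.2 fun i => ?_
  fin_cases i <;>
    simp only [diskPolar, Fin.zero_eta, Fin.mk_one, Fin.isValue, Matrix.cons_val_zero,
      Matrix.cons_val_one]
  · exact ((((hasDerivAt_pow 2 R).const_mul (M / 2)).mul_const _).const_add 1).congr_deriv
      (by push_cast; ring)
  · exact ((hasDerivAt_pow 2 R).mul_const _).congr_deriv (by push_cast; ring)

theorem deriv_diskPolar_angle_apply (M R θ : ℝ) (i : Fin 2) :
    deriv (fun t => diskPolar M R t i) θ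
      = ![-(M * R ^ 2 * Real.sin (2 * θ)), 2 * R ^ 2 * Real.cos (2 * θ)] i :=
  (hasDerivAt_pi.1 (hasDerivAt_diskPolar_angle M R θ) i).deriv

theorem deriv_diskPolar_radius_apply (M R θ : ℝ) (i : Fin 2) :
    deriv (fun r => diskPolar M r θ i) R
      = ![M * R * Real.cos (2 * θ), 2 * R * Real.sin (2 * θ)] i :=
  (hasDerivAt_pi.1 (hasDerivAt_diskPolar_radius M R θ) i).deriv

theorem diskPolar_jump (M R θ : ℝ) :
    (fun i => 2 * deriv (fun t => diskPolar 0 R t i) θ - 2 * deriv (fun t => diskPolar M R t i) θ)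
      = (M * R) • Jmat.transpose.mulVec (fun j => deriv (fun r => diskPolar 0 r θ j) R) := by
  simp only [deriv_diskPolar_angle_apply, deriv_diskPolar_radius_apply]
  ext i
  fin_cases i <;> simp [Jmat]
  ring

theorem Jmat_transpose : Jmat.transpose = -Jmat := by
  ext i j
  fin_cases i <;> fin_cases j <;> simp [Jmat]

/-- The disk-sector maps `u^s(R,θ) = (1, R² sin 2θ)` and
`u^p(R,θ) = (1 + (M/2)R² cos 2θ, R² sin 2θ)` are harmonic in Cartesian coordinates,
agree on the rays `θ = ±π/4`, and satisfy the jump conditions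
`2∂_θ u^s − 2∂_θ u^p = M R Jᵀ ∂_R u^s` on `θ = π/4` and
`2∂_θ u^s − 2∂_θ u^p = −M R J ∂_R u^s` on `θ = −π/4`. -/
theorem disk_sector_solution (M : ℝ)
    (Usc Upc : V2 → V2)
    (hUs : Usc = fun x => ![1, 2 * x 0 * x 1])
    (hUp : Upc = fun x => ![1 + (M / 2) * (x 0 ^ 2 - x 1 ^ 2), 2 * x 0 * x 1])
    (us up : ℝ → ℝ → V2)
    (hus : us = fun R θ => ![1, R ^ 2 * Real.sin (2 * θ)])
    (hup : up = fun R θ => ![1 + (M / 2) * R ^ 2 * Real.cos (2 * θ),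
                             R ^ 2 * Real.sin (2 * θ)]) :
    (∀ x, lap2 Usc x = 0) ∧
    (∀ x, lap2 Upc x = 0) ∧
    (∀ x : V2, x 0 = x 1 ∨ x 0 = -(x 1) → Usc x = Upc x) ∧
    (∀ R : ℝ,
      (fun i => 2 * deriv (fun t => us R t i) (Real.pi / 4)
              - 2 * deriv (fun t => up R t i) (Real.pi / 4))
        = (M * R) • Jmat.transpose.mulVec
            (fun j => deriv (fun r => us r (Real.pi / 4) j) R)) ∧
    (∀ R : ℝ,
      (fun i => 2 * deriv (fun t => us R t i) (-(Real.pi / 4))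
              - 2 * deriv (fun t => up R t i) (-(Real.pi / 4)))
        = (-(M * R)) • Jmat.mulVec
            (fun j => deriv (fun r => us r (-(Real.pi / 4)) j) R)) := by
  obtain rfl : Usc = diskQuad 0 := by rw [hUs]; funext x; simp [diskQuad]
  obtain rfl : Upc = diskQuad M := hUp
  obtain rfl : us = diskPolar 0 := by rw [hus]; funext R θ; simp [diskPolar]
  obtain rfl : up = diskPolar M := hup
  refine ⟨lap2_diskQuad 0, lap2_diskQuad M, fun x hx => diskQuad_eq_of_sq_eq_sq ?_ 0 M,
    fun R => diskPolar_jump M R _, fun R => ?_⟩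
  · rcases hx with h | h <;> simp [h]
  · rw [neg_smul, ← smul_neg, ← Matrix.neg_mulVec, ← Jmat_transpose]
    exact diskPolar_jump M R _
end
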